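/- The functions H_KdV5 and K_KdV5 are in involution with respect to the canonical Poisson bracket: {H_KdV5, K_KdV5}₀ = 0 at every point of ℝ⁴ with y ≠ 0. -/

import Mathlib

/-- Canonical Poisson bracket on ℝ⁴ with coordinates `(p_x, p_y, x, y)`. -/
noncomputable def pbracket (f g : ℝ → ℝ → ℝ → ℝ → ℝ) (px py x y : ℝ) : ℝ :=
    (deriv (fun t => f px py t y) x) * (deriv (fun t => g t py x y) px)
  - (deriv (fun t => f t py x y) px) * (deriv (fun t => g px py t y) x)
  + (deriv (fun t => f px py x t) y) * (deriv (fun t => g px t x y) py)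
  - (deriv (fun t => f px t x y) py) * (deriv (fun t => g px py x t) y)

/-- The KdV₅ Hamiltonian. -/
noncomputable def HKdV5 (a ω₁ ω₂ μ : ℝ) (px py x y : ℝ) : ℝ :=
  (1/2)*(px^2 + py^2) + (1/2)*(ω₁*x^2 + ω₂*y^2) + a*x*y^2 + 2*a*x^3 + μ/(2*y^2)

/-- The KdV₅ second integral. -/
noncomputable def KKdV5 (a ω₁ ω₂ μ : ℝ) (px py x y : ℝ) : ℝ :=
  4*a*y*px*py + (4*ω₂ - ω₁ - 4*a*x)*(py^2 + μ/y^2)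
    + a^2*y^4 + 4*a^2*x^2*y^2 + 4*a*ω₂*x*y^2 + ω₂*(4*ω₂ - ω₁)*y^2

/-! `H` and `K` are polynomial in `p_x`, `p_y`, `x` and Laurent in `y` (exponents from -2 to 4), so
all eight partial derivatives are explicit; substituted into the bracket and multiplied by `y³`,
they cancel identically. -/

theorem pbracket_eq_of_hasDerivAt {f g : ℝ → ℝ → ℝ → ℝ → ℝ}
    {px py x y fx fpx fy fpy gx gpx gy gpy : ℝ}
    (hfx : HasDerivAt (fun t => f px py t y) fx x) (hfpx : HasDerivAt (fun t => f t py x y) fpx px)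
    (hfy : HasDerivAt (fun t => f px py x t) fy y) (hfpy : HasDerivAt (fun t => f px t x y) fpy py)
    (hgx : HasDerivAt (fun t => g px py t y) gx x) (hgpx : HasDerivAt (fun t => g t py x y) gpx px)
    (hgy : HasDerivAt (fun t => g px py x t) gy y) (hgpy : HasDerivAt (fun t => g px t x y) gpy py) :
    pbracket f g px py x y = fx * gpx - fpx * gx + fy * gpy - fpy * gy := by
  rw [pbracket, hfx.deriv, hfpx.deriv, hfy.deriv, hfpy.deriv, hgx.deriv, hgpx.deriv, hgy.deriv,
    hgpy.deriv]

theorem hasDerivAt_cubic (c₀ c₁ c₂ c₃ t : ℝ) :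
    HasDerivAt (fun s => c₀ + c₁ * s + c₂ * s ^ 2 + c₃ * s ^ 3)
      (c₁ + 2 * c₂ * t + 3 * c₃ * t ^ 2) t := by
  refine ((((hasDerivAt_id' t).const_mul c₁).const_add c₀).add
    ((hasDerivAt_pow 2 t).const_mul c₂)).add ((hasDerivAt_pow 3 t).const_mul c₃)
    |>.congr_deriv ?_
  norm_num
  ring

theorem hasDerivAt_quartic_add_div_sq (c₀ c₁ c₂ c₃ c₄ d : ℝ) {t : ℝ} (ht : t ≠ 0) :
    HasDerivAt (fun s => c₀ + c₁ * s + c₂ * s ^ 2 + c₃ * s ^ 3 + c₄ * s ^ 4 + d / s ^ 2)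
      (c₁ + 2 * c₂ * t + 3 * c₃ * t ^ 2 + 4 * c₄ * t ^ 3 - 2 * d / t ^ 3) t := by
  refine ((hasDerivAt_cubic c₀ c₁ c₂ c₃ t).add ((hasDerivAt_pow 4 t).const_mul c₄)).add
    ((hasDerivAt_const t d).div (hasDerivAt_pow 2 t) (pow_ne_zero 2 ht)) |>.congr_deriv ?_
  norm_num
  field_simp
  ring

section KdV5

variable {a ω₁ ω₂ μ px py x y : ℝ}

theorem hasDerivAt_HKdV5_x :
    HasDerivAt (fun t => HKdV5 a ω₁ ω₂ μ px py t y) (ω₁ * x + a * y ^ 2 + 6 * a * x ^ 2) x := by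
  convert hasDerivAt_cubic (HKdV5 a ω₁ ω₂ μ px py 0 y) (a * y ^ 2) (ω₁ / 2) (2 * a) x using 1
  · funext t; simp only [HKdV5]; ring
  · ring

theorem hasDerivAt_HKdV5_px : HasDerivAt (fun t => HKdV5 a ω₁ ω₂ μ t py x y) px px := by
  convert hasDerivAt_cubic (HKdV5 a ω₁ ω₂ μ 0 py x y) 0 (1 / 2) 0 px using 1
  · funext t; simp only [HKdV5]; ring
  · ring

theorem hasDerivAt_HKdV5_py : HasDerivAt (fun t => HKdV5 a ω₁ ω₂ μ px t x y) py py := by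
  convert hasDerivAt_cubic (HKdV5 a ω₁ ω₂ μ px 0 x y) 0 (1 / 2) 0 py using 1
  · funext t; simp only [HKdV5]; ring
  · ring

theorem hasDerivAt_HKdV5_y (hy : y ≠ 0) :
    HasDerivAt (fun t => HKdV5 a ω₁ ω₂ μ px py x t) (ω₂ * y + 2 * a * x * y - μ / y ^ 3) y := by
  convert hasDerivAt_quartic_add_div_sq ((px ^ 2 + py ^ 2 + ω₁ * x ^ 2) / 2 + 2 * a * x ^ 3) 0
    (ω₂ / 2 + a * x) 0 0 (μ / 2) hy using 1
  · funext t; simp only [HKdV5]; ring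
  · ring

theorem hasDerivAt_KKdV5_x :
    HasDerivAt (fun t => KKdV5 a ω₁ ω₂ μ px py t y)
      (-4 * a * (py ^ 2 + μ / y ^ 2) + 8 * a ^ 2 * x * y ^ 2 + 4 * a * ω₂ * y ^ 2) x := by
  convert hasDerivAt_cubic (KKdV5 a ω₁ ω₂ μ px py 0 y)
    (-4 * a * (py ^ 2 + μ / y ^ 2) + 4 * a * ω₂ * y ^ 2) (4 * a ^ 2 * y ^ 2) 0 x using 1
  · funext t; simp only [KKdV5]; ring
  · ring

theorem hasDerivAt_KKdV5_px :
    HasDerivAt (fun t => KKdV5 a ω₁ ω₂ μ t py x y) (4 * a * y * py) px := by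
  convert hasDerivAt_cubic (KKdV5 a ω₁ ω₂ μ 0 py x y) (4 * a * y * py) 0 0 px using 1
  · funext t; simp only [KKdV5]; ring
  · ring

theorem hasDerivAt_KKdV5_py :
    HasDerivAt (fun t => KKdV5 a ω₁ ω₂ μ px t x y)
      (4 * a * y * px + 2 * (4 * ω₂ - ω₁ - 4 * a * x) * py) py := by
  convert hasDerivAt_cubic (KKdV5 a ω₁ ω₂ μ px 0 x y) (4 * a * y * px) (4 * ω₂ - ω₁ - 4 * a * x) 0
    py using 1
  · funext t; simp only [KKdV5]; ring
  · ring

theorem hasDerivAt_KKdV5_y (hy : y ≠ 0) :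
    HasDerivAt (fun t => KKdV5 a ω₁ ω₂ μ px py x t)
      (4 * a * px * py - 2 * (4 * ω₂ - ω₁ - 4 * a * x) * μ / y ^ 3 + 4 * a ^ 2 * y ^ 3
        + 8 * a ^ 2 * x ^ 2 * y + 8 * a * ω₂ * x * y + 2 * ω₂ * (4 * ω₂ - ω₁) * y) y := by
  convert hasDerivAt_quartic_add_div_sq ((4 * ω₂ - ω₁ - 4 * a * x) * py ^ 2) (4 * a * px * py)
    (4 * a ^ 2 * x ^ 2 + 4 * a * ω₂ * x + ω₂ * (4 * ω₂ - ω₁)) 0 (a ^ 2)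
    ((4 * ω₂ - ω₁ - 4 * a * x) * μ) hy using 1
  · funext t; simp only [KKdV5]; ring
  · ring

end KdV5

/-- `{H_KdV5, K_KdV5}₀ = 0` at every point with `y ≠ 0`. -/
theorem HKdV5_KKdV5_involution (a ω₁ ω₂ μ : ℝ) (px py x y : ℝ) (hy : y ≠ 0) :
    pbracket (HKdV5 a ω₁ ω₂ μ) (KKdV5 a ω₁ ω₂ μ) px py x y = 0 := by
  rw [pbracket_eq_of_hasDerivAt hasDerivAt_HKdV5_x hasDerivAt_HKdV5_px (hasDerivAt_HKdV5_y hy)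
    hasDerivAt_HKdV5_py hasDerivAt_KKdV5_x hasDerivAt_KKdV5_px (hasDerivAt_KKdV5_y hy)
    hasDerivAt_KKdV5_py]
  field_simp
  ring
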